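/- arXiv:math/0403096 — 5 statements merged into one kernel-verified Lean document; each statement's English description precedes it below -/
import Mathlib

section
/- Let p be a prime, q a primitive p²-th root of unity, c(z,y) = q^{-z(y-y')} where y' is the remainder of y mod p, and let b, d be integers coprime to p. If the function g(i,j) = (c(i,j)/c(i-d,j))·q^{bj} is p-periodic in each variable, then b ≡ d (mod p). -/
/-!
Along `i = 0` the function is `g 0 j = q ^ (b j - d (j - j'))`, so comparing `j = p` with `j = 0`
gives `q ^ ((b - d) p) = 1`. As `q` has order `p²`, this forces `p² ∣ (b - d) p`, i.e. `p ∣ b - d`.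
-/

theorem IsPrimitiveRoot.dvd_of_zpow_mul_eq_one {G : Type*} [DivisionCommMonoid G] {ζ : G}
    {n m : ℕ} (h : IsPrimitiveRoot ζ (n * m)) (hm : m ≠ 0) {k : ℤ} (hk : ζ ^ (k * m) = 1) :
    (n : ℤ) ∣ k := by
  have hdvd : (n : ℤ) * m ∣ k * m := by exact_mod_cast (h.zpow_eq_one_iff_dvd _).mp hk
  exact (mul_dvd_mul_iff_right (by exact_mod_cast hm)).mp hdvd

theorem zpow_neg_mul_div_zpow_neg_mul_mul_zpow {G₀ : Type*} [CommGroupWithZero G₀] {q : G₀}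
    (hq : q ≠ 0) (i d r s : ℤ) :
    q ^ (-(i * r)) / q ^ (-((i - d) * r)) * q ^ s = q ^ (s - d * r) := by
  rw [← zpow_sub₀ hq, ← zpow_add₀ hq]
  congr 1
  ring

theorem periodicity_forces_congruence_general
    (p : ℕ) (hp : p.Prime) (q : ℂ) (hq : IsPrimitiveRoot q (p ^ 2))
    (b d : ℤ)
    (c : ℤ → ℤ → ℂ)
    (hc : ∀ z y : ℤ, c z y = q ^ (-(z * (y - y % (p : ℤ)))))
    (g : ℤ → ℤ → ℂ)
    (hg : ∀ i j : ℤ, g i j = c i j / c (i - d) j * q ^ (b * j))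
    (hper : ∀ i j : ℤ, g (i + p) j = g i j ∧ g i (j + p) = g i j) :
    b ≡ d [ZMOD p] := by
  have hq0 : q ≠ 0 := hq.ne_zero (pow_ne_zero 2 hp.ne_zero)
  have hg0 : ∀ j : ℤ, g 0 j = q ^ (b * j - d * (j - j % p)) := fun j => by
    rw [hg, hc, hc, zpow_neg_mul_div_zpow_neg_mul_mul_zpow hq0]
  have hperiod : q ^ ((b - d) * p) = 1 := by
    have h := (hper 0 0).2
    rw [hg0, hg0] at h
    simpa [sub_mul] using h
  rw [sq] at hq
  exact (Int.modEq_iff_dvd.mpr (hq.dvd_of_zpow_mul_eq_one hp.ne_zero hperiod)).symm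

/-- For `p` prime, `q` a primitive `p²`-th root of unity, `c(z,y) = q^{-z(y-y')}`
(`y'` the remainder of `y` mod `p`), and `b, d` coprime to `p`: if
`g(i,j) = (c(i,j)/c(i-d,j))·q^{bj}` is `p`-periodic in each variable, then
`b ≡ d (mod p)`. -/
theorem periodicity_forces_congruence
    (p : ℕ) (hp : p.Prime) (q : ℂ) (hq : IsPrimitiveRoot q (p ^ 2))
    (b d : ℤ) (hb : IsCoprime b (p : ℤ)) (hd : IsCoprime d (p : ℤ))
    (c : ℤ → ℤ → ℂ)
    (hc : ∀ z y : ℤ, c z y = q ^ (-(z * (y - y % (p : ℤ)))))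
    (g : ℤ → ℤ → ℂ)
    (hg : ∀ i j : ℤ, g i j = c i j / c (i - d) j * q ^ (b * j))
    (hper : ∀ i j : ℤ, g (i + p) j = g i j ∧ g i (j + p) = g i j) :
    b ≡ d [ZMOD p] :=
  periodicity_forces_congruence_general p hp q hq b d c hc g hg hper
end

section
/- Let n ≥ 2 and q a primitive n²-th root of unity. The function ψ : Z_n × Z_n × Z_n → C^* defined by ψ(β,γ,δ) = q^{β·((γ+δ)' - γ - δ)}, where β, γ, δ are taken in {0,...,n-1} and (γ+δ)' is the remainder of γ+δ mod n, is a 3-cocycle on Z_n which is not a coboundary; i.e., it represents a nontrivial class in H³(Z_n, C^*). -/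
open Finset

private lemma key_dvd (m a b c d : ℤ) :
    m ^ 2 ∣ (b * ((c + d) % m - c - d) + a * (((b + c) % m + d) % m - (b + c) % m - d)
        + a * ((b + c) % m - b - c))
      - ((a + b) % m * ((c + d) % m - c - d)
        + a * ((b + (c + d) % m) % m - b - (c + d) % m)) := by
  have h1 : ((b + c) % m + d) % m = (b + c + d) % m := by
    rw [Int.add_emod, Int.emod_emod_of_dvd _ dvd_rfl, ← Int.add_emod]
  have h2 : (b + (c + d) % m) % m = (b + (c + d)) % m := by
    rw [Int.add_emod, Int.emod_emod_of_dvd _ dvd_rfl, ← Int.add_emod]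
  refine ⟨-(((a + b) / m) * ((c + d) / m)), ?_⟩
  rw [h1, h2, Int.emod_def (a + b), Int.emod_def (c + d), Int.emod_def (b + c),
    Int.emod_def (b + c + d), Int.emod_def (b + (c + d))]
  ring_nf

/-- For `n ≥ 2` and `q` a primitive `n²`-th root of unity, the function
`ψ(β,γ,δ) = q^{β((γ+δ)' - γ - δ)}` (representatives in `{0,…,n-1}`, `(γ+δ)'`
the remainder mod `n`) is a 3-cocycle on `ℤ_n` which is not a coboundary. -/
theorem assoc_cocycle_nontrivial
    (n : ℕ) (hn : 2 ≤ n) (q : ℂ) (hq : IsPrimitiveRoot q (n ^ 2))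
    (ψ : ZMod n → ZMod n → ZMod n → ℂ)
    (hψ : ∀ β γ δ : ZMod n,
      ψ β γ δ = q ^ ((β.val : ℤ) *
        (((γ.val : ℤ) + (δ.val : ℤ)) % (n : ℤ) - (γ.val : ℤ) - (δ.val : ℤ)))) :
    (∀ β γ δ ε : ZMod n,
      ψ γ δ ε * ψ β (γ + δ) ε * ψ β γ δ = ψ (β + γ) δ ε * ψ β γ (δ + ε)) ∧
    ¬ ∃ b : ZMod n → ZMod n → ℂ, (∀ x y, b x y ≠ 0) ∧
      ∀ β γ δ : ZMod n,
        ψ β γ δ = b γ δ * b β (γ + δ) / (b (β + γ) δ * b β γ) := by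
  haveI : NeZero n := ⟨by omega⟩
  have hq0 : q ≠ 0 := hq.ne_zero (by positivity)
  have hdvd_pow : ∀ X Y : ℤ, ((n : ℤ)) ^ 2 ∣ X - Y → q ^ X = q ^ Y := by
    intro X Y h
    have h1 : q ^ (X - Y) = 1 := by
      rw [hq.zpow_eq_one_iff_dvd]
      push_cast
      exact h
    calc q ^ X = q ^ (X - Y) * q ^ Y := by
          rw [← zpow_add₀ hq0]; ring_nf
      _ = q ^ Y := by rw [h1, one_mul]
  have hval : ∀ x y : ZMod n, ((x + y).val : ℤ) = ((x.val : ℤ) + (y.val : ℤ)) % (n : ℤ) := by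
    intro x y
    rw [ZMod.val_add]
    push_cast
    ring
  constructor
  · intro β γ δ ε
    rw [hψ, hψ, hψ, hψ, hψ, ← zpow_add₀ hq0, ← zpow_add₀ hq0, ← zpow_add₀ hq0]
    apply hdvd_pow
    rw [hval γ δ, hval β γ, hval δ ε]
    obtain ⟨t, ht⟩ := key_dvd (n : ℤ) β.val γ.val δ.val ε.val
    exact ⟨t, by linear_combination ht⟩
  · rintro ⟨b, hb0, hbψ⟩
    haveI : Fact (1 < n) := ⟨by omega⟩
    have h1lt : (1 : ZMod n).val = 1 := ZMod.val_one n
    have key2 : ∏ γ : ZMod n, ψ 1 γ 1 = 1 := by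
      have : ∏ γ : ZMod n, ψ 1 γ 1
          = ∏ γ : ZMod n, (b γ 1 * b 1 (γ + 1) / (b (1 + γ) 1 * b 1 γ)) :=
        Finset.prod_congr rfl fun γ _ => hbψ 1 γ 1
      rw [this, Finset.prod_div_distrib, Finset.prod_mul_distrib, Finset.prod_mul_distrib]
      have e1 : ∏ γ : ZMod n, b 1 (γ + 1) = ∏ γ : ZMod n, b 1 γ :=
        Fintype.prod_equiv (Equiv.addRight (1 : ZMod n)) _ _ (fun γ => rfl)
      have e2 : ∏ γ : ZMod n, b (1 + γ) 1 = ∏ γ : ZMod n, b γ 1 :=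
        Fintype.prod_equiv (Equiv.addLeft (1 : ZMod n)) _ _ (fun γ => rfl)
      rw [e1, e2]
      apply div_self
      exact mul_ne_zero (Finset.prod_ne_zero_iff.2 fun γ _ => hb0 γ 1)
        (Finset.prod_ne_zero_iff.2 fun γ _ => hb0 1 γ)
    have hψ1 : ∀ γ : ZMod n, ψ 1 γ 1 = q ^ (((γ + 1).val : ℤ) - (γ.val : ℤ) - 1) := by
      intro γ
      rw [hψ]
      congr 1
      rw [hval γ 1, h1lt]
      push_cast
      ring
    have prodpow : ∀ (s : Finset (ZMod n)) (f : ZMod n → ℤ),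
        ∏ γ ∈ s, q ^ f γ = q ^ (∑ γ ∈ s, f γ) := by
      intro s f
      induction s using Finset.induction with
      | empty => simp
      | insert _ _ h ih =>
        rw [Finset.prod_insert h, Finset.sum_insert h, ih, zpow_add₀ hq0]
    have hsum : ∑ γ : ZMod n, (((γ + 1).val : ℤ) - (γ.val : ℤ) - 1) = -(n : ℤ) := by
      rw [Finset.sum_sub_distrib, Finset.sum_sub_distrib]
      have e3 : ∑ γ : ZMod n, ((γ + 1).val : ℤ) = ∑ γ : ZMod n, ((γ.val : ℤ)) :=
        Fintype.sum_equiv (Equiv.addRight (1 : ZMod n)) _ _ (fun γ => rfl)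
      rw [e3]
      simp [ZMod.card]
    have key3 : ∏ γ : ZMod n, ψ 1 γ 1 = q ^ (-(n : ℤ)) := by
      rw [Finset.prod_congr rfl fun γ _ => hψ1 γ, prodpow, hsum]
    rw [key3] at key2
    rw [hq.zpow_eq_one_iff_dvd] at key2
    rw [dvd_neg] at key2
    have : ((n ^ 2 : ℕ) : ℤ) ∣ (n : ℤ) := key2
    rw [Int.natCast_dvd_natCast] at this
    have := Nat.le_of_dvd (by omega) this
    nlinarith
end

section
/- Let p be a prime and q a primitive p²-th root of unity. In the algebra A generated by elements a, x subject to the relations a·x = q^p·x·a, a^p = 1, x^{p²} = 0, the set {a^i x^j : 0 ≤ i ≤ p-1, 0 ≤ j ≤ p²-1} is a basis; in particular dim A = p³. -/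
open FreeAlgebra

/-- The defining relations of the algebra of `A(q)`:
`a·x = q^p·x·a`, `a^p = 1`, `x^{p²} = 0`, where `a = X 0`, `x = X 1`. -/
def AqRel (p : ℕ) (q : ℂ) :
    FreeAlgebra ℂ (Fin 2) → FreeAlgebra ℂ (Fin 2) → Prop := fun u v =>
  (u = ι ℂ (0 : Fin 2) * ι ℂ (1 : Fin 2) ∧
      v = algebraMap ℂ _ (q ^ p) * (ι ℂ (1 : Fin 2) * ι ℂ (0 : Fin 2))) ∨
  (u = ι ℂ (0 : Fin 2) ^ p ∧ v = 1) ∨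
  (u = ι ℂ (1 : Fin 2) ^ (p ^ 2) ∧ v = 0)

/-- The underlying algebra of `A(q)`. -/
abbrev AqAlgebra (p : ℕ) (q : ℂ) := RingQuot (AqRel p q)

/-- The images of the generators `a`, `x` in `A(q)`. -/
noncomputable def Aq_a (p : ℕ) (q : ℂ) : AqAlgebra p q :=
  RingQuot.mkAlgHom ℂ (AqRel p q) (ι ℂ (0 : Fin 2))

noncomputable def Aq_x (p : ℕ) (q : ℂ) : AqAlgebra p q :=
  RingQuot.mkAlgHom ℂ (AqRel p q) (ι ℂ (1 : Fin 2))

lemma Aq_rel1 (p : ℕ) (q : ℂ) :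
    Aq_a p q * Aq_x p q = (q ^ p) • (Aq_x p q * Aq_a p q) := by
  have h := RingQuot.mkAlgHom_rel ℂ (s := AqRel p q) (Or.inl ⟨rfl, rfl⟩)
  rw [map_mul, map_mul, map_mul, AlgHom.commutes] at h
  rw [Aq_a, Aq_x, h, Algebra.smul_def]

lemma Aq_rel2 (p : ℕ) (q : ℂ) : Aq_a p q ^ p = 1 := by
  have h := RingQuot.mkAlgHom_rel ℂ (s := AqRel p q) (Or.inr (Or.inl ⟨rfl, rfl⟩))
  rw [map_pow, map_one] at h
  rw [Aq_a, h]

lemma Aq_rel3 (p : ℕ) (q : ℂ) : Aq_x p q ^ (p ^ 2) = 0 := by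
  have h := RingQuot.mkAlgHom_rel ℂ (s := AqRel p q) (Or.inr (Or.inr ⟨rfl, rfl⟩))
  rw [map_pow, map_zero] at h
  rw [Aq_x, h]

lemma Aq_xa (p : ℕ) (q : ℂ) (hp0 : 0 < p) (hq1 : q ^ (p ^ 2) = 1) :
    Aq_x p q * Aq_a p q = ((q ^ p) ^ (p - 1)) • (Aq_a p q * Aq_x p q) := by
  have hζ : (q ^ p) ^ p = 1 := by rw [← pow_mul, ← pow_two]; exact hq1
  rw [Aq_rel1, smul_smul, ← pow_succ]
  have : p - 1 + 1 = p := by omega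
  rw [this, hζ, one_smul]

lemma Aq_x_apow (p : ℕ) (q : ℂ) (hp0 : 0 < p) (hq1 : q ^ (p ^ 2) = 1) (m : ℕ) :
    Aq_x p q * Aq_a p q ^ m = (((q ^ p) ^ (p - 1)) ^ m) • (Aq_a p q ^ m * Aq_x p q) := by
  induction m with
  | zero => simp
  | succ m ih =>
    rw [pow_succ, ← mul_assoc, ih, smul_mul_assoc, mul_assoc, Aq_xa p q hp0 hq1,
      mul_smul_comm, smul_smul, ← pow_succ, mul_assoc]

lemma Aq_xpow_apow (p : ℕ) (q : ℂ) (hp0 : 0 < p) (hq1 : q ^ (p ^ 2) = 1) (n m : ℕ) :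
    Aq_x p q ^ n * Aq_a p q ^ m =
      ((((q ^ p) ^ (p - 1)) ^ m) ^ n) • (Aq_a p q ^ m * Aq_x p q ^ n) := by
  induction n with
  | zero => simp
  | succ n ih =>
    rw [pow_succ', mul_assoc, ih, mul_smul_comm, ← mul_assoc,
      Aq_x_apow p q hp0 hq1, smul_mul_assoc, smul_smul, ← pow_succ, mul_assoc]

lemma Aq_apow_reduce (p : ℕ) (q : ℂ) (m : ℕ) :
    Aq_a p q ^ m = Aq_a p q ^ (m % p) := by
  conv_lhs => rw [← Nat.div_add_mod m p]
  rw [pow_add, pow_mul, Aq_rel2, one_pow, one_mul]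

lemma Aq_xpow_zero (p : ℕ) (q : ℂ) (n : ℕ) (hn : p ^ 2 ≤ n) :
    Aq_x p q ^ n = 0 := by
  rw [← Nat.add_sub_cancel' hn, pow_add, Aq_rel3, zero_mul]

lemma Aq_monomial_mem (p : ℕ) (q : ℂ) (hp0 : 0 < p) (m n : ℕ) :
    Aq_a p q ^ m * Aq_x p q ^ n ∈ Submodule.span ℂ
      (Set.range (fun ij : Fin p × Fin (p ^ 2) =>
        Aq_a p q ^ (ij.1 : ℕ) * Aq_x p q ^ (ij.2 : ℕ))) := by
  by_cases h : n < p ^ 2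
  · rw [Aq_apow_reduce]
    exact Submodule.subset_span ⟨(⟨m % p, Nat.mod_lt _ hp0⟩, ⟨n, h⟩), rfl⟩
  · rw [Aq_xpow_zero p q n (by omega), mul_zero]
    exact Submodule.zero_mem _

lemma Aq_span_top (p : ℕ) (q : ℂ) (hp0 : 0 < p) (hq1 : q ^ (p ^ 2) = 1) :
    Submodule.span ℂ (Set.range (fun ij : Fin p × Fin (p ^ 2) =>
        Aq_a p q ^ (ij.1 : ℕ) * Aq_x p q ^ (ij.2 : ℕ))) = ⊤ := by
  set M := Submodule.span ℂ (Set.range (fun ij : Fin p × Fin (p ^ 2) =>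
        Aq_a p q ^ (ij.1 : ℕ) * Aq_x p q ^ (ij.2 : ℕ))) with hM
  have h1 : ∀ m ∈ M, Aq_a p q * m ∈ M := by
    intro m hm
    refine Submodule.span_induction ?_ ?_ ?_ ?_ hm
    · rintro y ⟨ij, rfl⟩
      simp only
      rw [← mul_assoc, ← pow_succ']
      exact Aq_monomial_mem p q hp0 _ _
    · rw [mul_zero]; exact M.zero_mem
    · intro y z _ _ hy hz; rw [mul_add]; exact M.add_mem hy hz
    · intro c y _ hy; rw [mul_smul_comm]; exact M.smul_mem c hy
  have h2 : ∀ m ∈ M, Aq_x p q * m ∈ M := by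
    intro m hm
    refine Submodule.span_induction ?_ ?_ ?_ ?_ hm
    · rintro y ⟨ij, rfl⟩
      simp only
      rw [← mul_assoc, Aq_x_apow p q hp0 hq1, smul_mul_assoc, mul_assoc, ← pow_succ']
      exact M.smul_mem _ (Aq_monomial_mem p q hp0 _ _)
    · rw [mul_zero]; exact M.zero_mem
    · intro y z _ _ hy hz; rw [mul_add]; exact M.add_mem hy hz
    · intro c y _ hy; rw [mul_smul_comm]; exact M.smul_mem c hy
  let S : Subalgebra ℂ (AqAlgebra p q) :=
  { carrier := {z | ∀ m ∈ M, z * m ∈ M}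
    mul_mem' := fun hz hw m hm => by rw [mul_assoc]; exact hz _ (hw _ hm)
    one_mem' := fun m hm => by rwa [one_mul]
    add_mem' := fun hz hw m hm => by rw [add_mul]; exact M.add_mem (hz _ hm) (hw _ hm)
    zero_mem' := fun m hm => by rw [zero_mul]; exact M.zero_mem
    algebraMap_mem' := fun c m hm => by
      rw [← Algebra.smul_def]; exact M.smul_mem c hm }
  have hS : ∀ z : AqAlgebra p q, z ∈ S := by
    intro z
    obtain ⟨w, rfl⟩ := RingQuot.mkAlgHom_surjective ℂ (AqRel p q) z
    induction w using FreeAlgebra.induction with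
    | grade0 c =>
      rw [AlgHom.commutes]
      exact S.algebraMap_mem c
    | grade1 i =>
      fin_cases i
      · exact fun m hm => h1 m hm
      · exact fun m hm => h2 m hm
    | mul y z hy hz => rw [map_mul]; exact S.mul_mem hy hz
    | add y z hy hz => rw [map_add]; exact S.add_mem hy hz
  have h1M : (1 : AqAlgebra p q) ∈ M := by
    have := Aq_monomial_mem p q hp0 0 0
    simpa using this
  rw [eq_top_iff]
  intro z _
  have := hS z 1 h1M
  rwa [mul_one] at this


/-- The representation space. -/
abbrev Vsp (p : ℕ) := (ZMod p × Fin (p ^ 2)) → ℂ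

/-- The operator for `a`. -/
def opA (p : ℕ) (ζ : ℂ) : Module.End ℂ (Vsp p) where
  toFun f := fun sk => ζ ^ (sk.2 : ℕ) * f (sk.1 - 1, sk.2)
  map_add' f g := by funext sk; simp [mul_add]
  map_smul' c f := by funext sk; simp [Pi.smul_apply, smul_eq_mul]; ring

/-- The operator for `x`. -/
def opX (p : ℕ) : Module.End ℂ (Vsp p) where
  toFun f := fun sk =>
    if h : (sk.2 : ℕ) = 0 then 0
    else f (sk.1, ⟨(sk.2 : ℕ) - 1, lt_of_le_of_lt (Nat.sub_le _ _) sk.2.isLt⟩)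
  map_add' f g := by
    funext sk; by_cases h : (sk.2 : ℕ) = 0 <;> simp [h]
  map_smul' c f := by
    funext sk; by_cases h : (sk.2 : ℕ) = 0 <;> simp [h]

lemma opA_apply (p : ℕ) (ζ : ℂ) (f : Vsp p) (s : ZMod p) (k : Fin (p ^ 2)) :
    opA p ζ f (s, k) = ζ ^ (k : ℕ) * f (s - 1, k) := rfl

lemma opX_apply (p : ℕ) (f : Vsp p) (s : ZMod p) (k : Fin (p ^ 2)) :
    opX p f (s, k) = if h : (k : ℕ) = 0 then 0
      else f (s, ⟨(k : ℕ) - 1, lt_of_le_of_lt (Nat.sub_le _ _) k.isLt⟩) := rfl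

lemma opA_pow (p : ℕ) (ζ : ℂ) (n : ℕ) (f : Vsp p) (s : ZMod p) (k : Fin (p ^ 2)) :
    ((opA p ζ) ^ n) f (s, k) = ζ ^ (n * (k : ℕ)) * f (s - n, k) := by
  induction n generalizing s with
  | zero => simp
  | succ n ih =>
    simp only [pow_succ', Module.End.mul_apply]
    rw [opA_apply, ih]
    have h1 : s - 1 - (n : ZMod p) = s - ((n + 1 : ℕ) : ZMod p) := by push_cast; ring
    rw [h1, ← mul_assoc, ← pow_add]
    congr 2
    ring

lemma opX_pow (p : ℕ) (n : ℕ) (f : Vsp p) (s : ZMod p) (k : Fin (p ^ 2)) :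
    ((opX p) ^ n) f (s, k) =
      if h : n ≤ (k : ℕ) then
        f (s, ⟨(k : ℕ) - n, lt_of_le_of_lt (Nat.sub_le _ _) k.isLt⟩) else 0 := by
  induction n generalizing s k with
  | zero => simp
  | succ n ih =>
    simp only [pow_succ', Module.End.mul_apply]
    rw [opX_apply]
    by_cases hk : (k : ℕ) = 0
    · simp [hk]
    · rw [dif_neg hk, ih]
      split_ifs with h1 h2 h2
      · congr 1
        have : ((⟨(k : ℕ) - 1, lt_of_le_of_lt (Nat.sub_le _ _) k.isLt⟩ : Fin (p ^ 2)) : ℕ) = (k : ℕ) - 1 := rfl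
        exact Prod.ext rfl (by apply Fin.ext; simp only [this]; omega)
      · exact absurd h2 (by simp at h1 ⊢; omega)
      · exact absurd h1 (by simp at h2 ⊢; omega)
      · rfl

lemma rel_A (p : ℕ) (ζ : ℂ) (hζ : ζ ^ p = 1) : (opA p ζ) ^ p = 1 := by
  apply LinearMap.ext
  intro f
  funext sk
  obtain ⟨s, k⟩ := sk
  rw [opA_pow]
  have h1 : ζ ^ (p * (k : ℕ)) = 1 := by rw [pow_mul, hζ, one_pow]
  have h2 : ((p : ℕ) : ZMod p) = 0 := ZMod.natCast_self p
  rw [h1, h2, sub_zero, one_mul]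
  rfl

lemma rel_X (p : ℕ) : (opX p) ^ (p ^ 2) = 0 := by
  apply LinearMap.ext
  intro f
  funext sk
  obtain ⟨s, k⟩ := sk
  rw [opX_pow, dif_neg (by omega)]
  rfl

lemma rel_AX (p : ℕ) (ζ : ℂ) :
    opA p ζ * opX p = (algebraMap ℂ (Module.End ℂ (Vsp p)) ζ) * (opX p * opA p ζ) := by
  apply LinearMap.ext
  intro f
  funext sk
  obtain ⟨s, k⟩ := sk
  simp only [Module.End.mul_apply, Module.algebraMap_end_apply, Pi.smul_apply, smul_eq_mul]
  rw [opA_apply, opX_apply, opX_apply]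
  by_cases hk : (k : ℕ) = 0
  · rw [dif_pos hk, dif_pos hk, mul_zero, mul_zero]
  · rw [dif_neg hk, dif_neg hk, opA_apply]
    have : ((⟨(k : ℕ) - 1, lt_of_le_of_lt (Nat.sub_le _ _) k.isLt⟩ : Fin (p ^ 2)) : ℕ) = (k : ℕ) - 1 := rfl
    rw [this, ← mul_assoc, ← pow_succ']
    congr 2
    omega



/-- For `p` prime and `q` a primitive `p²`-th root of unity, the monomials
`a^i x^j` with `0 ≤ i ≤ p-1`, `0 ≤ j ≤ p²-1` form a basis of the algebra
generated by `a, x` with relations `ax = q^p xa`, `a^p = 1`, `x^{p²} = 0`;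
in particular its dimension is `p³`. -/
theorem Aq_basis_dim (p : ℕ) (hp : p.Prime) (q : ℂ)
    (hq : IsPrimitiveRoot q (p ^ 2)) :
    (LinearIndependent ℂ
        (fun ij : Fin p × Fin (p ^ 2) => Aq_a p q ^ (ij.1 : ℕ) * Aq_x p q ^ (ij.2 : ℕ)) ∧
      Submodule.span ℂ
        (Set.range (fun ij : Fin p × Fin (p ^ 2) =>
          Aq_a p q ^ (ij.1 : ℕ) * Aq_x p q ^ (ij.2 : ℕ))) = ⊤) ∧
    Module.finrank ℂ (AqAlgebra p q) = p ^ 3 := by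
  haveI : NeZero p := ⟨hp.ne_zero⟩
  have hp0 : 0 < p := hp.pos
  have hq1 : q ^ (p ^ 2) = 1 := hq.pow_eq_one
  have hq0 : q ≠ 0 := by
    intro h
    rw [h, zero_pow (by positivity)] at hq1
    exact zero_ne_one hq1
  set ζ : ℂ := q ^ p with hζdef
  have hζp : ζ ^ p = 1 := by
    rw [hζdef, ← pow_mul, show p * p = p ^ 2 by ring]; exact hq1
  have hζ0 : ζ ≠ 0 := pow_ne_zero _ hq0
  have hrel : ∀ u v, AqRel p q u v →
      (FreeAlgebra.lift ℂ ![opA p ζ, opX p]) u = (FreeAlgebra.lift ℂ ![opA p ζ, opX p]) v := by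
    rintro u v (⟨rfl, rfl⟩ | ⟨rfl, rfl⟩ | ⟨rfl, rfl⟩)
    · simp only [map_mul, lift_ι_apply, AlgHom.commutes, Matrix.cons_val_zero,
        Matrix.cons_val_one, Matrix.head_cons]
      exact rel_AX p ζ
    · simp only [map_pow, lift_ι_apply, map_one, Matrix.cons_val_zero]
      exact rel_A p ζ hζp
    · simp only [map_pow, lift_ι_apply, map_zero, Matrix.cons_val_one, Matrix.head_cons]
      exact rel_X p
  let φ : AqAlgebra p q →ₐ[ℂ] Module.End ℂ (Vsp p) :=
    RingQuot.liftAlgHom ℂ ⟨FreeAlgebra.lift ℂ ![opA p ζ, opX p], hrel⟩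
  have hφa : φ (Aq_a p q) = opA p ζ := by
    rw [Aq_a, RingQuot.liftAlgHom_mkAlgHom_apply]
    simp [lift_ι_apply]
  have hφx : φ (Aq_x p q) = opX p := by
    rw [Aq_x, RingQuot.liftAlgHom_mkAlgHom_apply]
    simp [lift_ι_apply]
  have hli : LinearIndependent ℂ
      (fun ij : Fin p × Fin (p ^ 2) => Aq_a p q ^ (ij.1 : ℕ) * Aq_x p q ^ (ij.2 : ℕ)) := by
    rw [Fintype.linearIndependent_iff]
    intro c hc ij
    have h0 : (∑ kl : Fin p × Fin (p ^ 2),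
        c kl • (opA p ζ ^ (kl.1 : ℕ) * opX p ^ (kl.2 : ℕ))) = 0 := by
      have h := congrArg φ hc
      simp only [map_sum, map_smul, map_mul, map_pow, hφa, hφx, map_zero] at h
      exact h
    let δ : Vsp p := fun sk => if sk.1 = 0 ∧ (sk.2 : ℕ) = 0 then 1 else 0
    have h1 := congrFun (congrArg (fun T : Module.End ℂ (Vsp p) => T δ) h0)
      ((((ij.1 : ℕ) : ZMod p)), ij.2)
    simp only [LinearMap.zero_apply, Pi.zero_apply] at h1
    rw [LinearMap.sum_apply] at h1
    rw [Finset.sum_apply] at h1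
    have hval : ∀ kl : Fin p × Fin (p ^ 2),
        (c kl • (opA p ζ ^ (kl.1 : ℕ) * opX p ^ (kl.2 : ℕ))) δ
            ((((ij.1 : ℕ) : ZMod p)), ij.2) =
          if kl = ij then c ij * ζ ^ ((ij.1 : ℕ) * (ij.2 : ℕ)) else 0 := by
      intro kl
      rw [LinearMap.smul_apply, Pi.smul_apply, smul_eq_mul, Module.End.mul_apply,
        opA_pow, opX_pow]
      by_cases hle : (kl.2 : ℕ) ≤ (ij.2 : ℕ)
      · rw [dif_pos hle]
        show c kl * (ζ ^ _ * (if _ ∧ _ then (1:ℂ) else 0)) = _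
        by_cases heq : kl = ij
        · subst heq
          rw [if_pos]
          · rw [if_pos rfl, mul_one]
          · constructor
            · rw [sub_self]
            · show (kl.2 : ℕ) - (kl.2 : ℕ) = 0
              omega
        · rw [if_neg, if_neg heq, mul_zero, mul_zero]
          intro ⟨hs, hk⟩
          apply heq
          have hs' : ((ij.1 : ℕ) : ZMod p) = ((kl.1 : ℕ) : ZMod p) := by
            rwa [sub_eq_zero] at hs
          have hs'' : (ij.1 : ℕ) = (kl.1 : ℕ) := by
            have := congrArg ZMod.val hs'
            rwa [ZMod.val_cast_of_lt ij.1.isLt, ZMod.val_cast_of_lt kl.1.isLt] at this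
          have hk' : (ij.2 : ℕ) - (kl.2 : ℕ) = 0 := hk
          have hk'' : (ij.2 : ℕ) = (kl.2 : ℕ) := by omega
          exact Prod.ext (Fin.ext hs''.symm) (Fin.ext hk''.symm)
      · rw [dif_neg hle, mul_zero, if_neg, mul_zero]
        intro heq
        subst heq
        omega
    rw [Finset.sum_congr rfl (fun kl _ => hval kl), Finset.sum_ite_eq'] at h1
    simp only [Finset.mem_univ, if_pos] at h1
    exact (mul_eq_zero.mp h1).resolve_right (pow_ne_zero _ hζ0)
  have hsp := Aq_span_top p q hp0 hq1
  refine ⟨⟨hli, hsp⟩, ?_⟩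
  let b : Module.Basis (Fin p × Fin (p ^ 2)) ℂ (AqAlgebra p q) := Module.Basis.mk hli (by rw [hsp])
  rw [Module.finrank_eq_card_basis b, Fintype.card_prod, Fintype.card_fin, Fintype.card_fin]
  ring
end

section
/- Let n ≥ 2, m ≥ 1, q a primitive n²-th root of unity, and a_{ij} ∈ Z/n²Z. The function Ψ : (Z_n^m)³ → C^*, Ψ(β,γ,δ) = Π_{i,j=1}^m q^{a_{ij} β_i ((γ_j+δ_j)' - γ_j - δ_j)} (components of β,γ,δ taken in {0,...,n-1}, (γ_j+δ_j)' the remainder mod n), is a 3-cocycle on Z_n^m. Moreover, if a_{ii} is not congruent to 0 mod n for some i, then the restriction of Ψ to the i-th cyclic factor Z_n is a nontrivial 3-cocycle, so Ψ represents a nontrivial cohomology class in H³(Z_n^m, C^*). -/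
/-!
Write `c(x, y) = (x + y)' - x - y ∈ nℤ` for the carry of `ℤ_n`, an additive 2-cocycle, so
that `Ψ = q ^ E` with `E(β, γ, δ) = ∑ a_ij β_i c(γ_j, δ_j)`. The coboundary of `E` is
`-∑ a_ij c(β_i, γ_i) c(δ_j, ε_j)`, a multiple of `n²`, hence invisible in the exponent of `q`.
For nontriviality, reindexing shows that a coboundary `ψ` satisfies `∏_y ψ(g, y, g) = 1`; on
the `i`-th cyclic factor with `g = 1` this product is `q ^ (-n a_ii)`, which is `1` only if
`n ∣ a_ii`.
-/

namespace ZMod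

/-- `-n` if `x.val + y.val ≥ n`, and `0` otherwise. -/
def carry (n : ℕ) (x y : ZMod n) : ℤ :=
  ((x.val : ℤ) + (y.val : ℤ)) % (n : ℤ) - (x.val : ℤ) - (y.val : ℤ)

variable {n : ℕ}

theorem dvd_carry (x y : ZMod n) : (n : ℤ) ∣ carry n x y :=
  ⟨-(((x.val : ℤ) + y.val) / n), by rw [carry, Int.emod_def]; ring⟩

variable [NeZero n]

theorem carry_eq (x y : ZMod n) : carry n x y = ((x + y).val : ℤ) - x.val - y.val := by
  rw [carry, val_add]
  push_cast
  rfl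

@[simp]
theorem carry_zero_left (y : ZMod n) : carry n 0 y = 0 := by
  simp [carry_eq]

theorem carry_add_carry (x y z : ZMod n) :
    carry n x y + carry n (x + y) z = carry n y z + carry n x (y + z) := by
  simp only [carry_eq, add_assoc]
  ring

theorem sum_carry_left (z : ZMod n) : ∑ y : ZMod n, carry n y z = -(n * z.val) := by
  have hshift : ∑ y : ZMod n, ((y + z).val : ℤ) = ∑ y : ZMod n, (y.val : ℤ) :=
    Equiv.sum_comp (Equiv.addRight z) (fun y => (y.val : ℤ))
  simp only [carry_eq, Finset.sum_sub_distrib, hshift, Finset.sum_const, Finset.card_univ, card,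
    nsmul_eq_mul]
  ring

end ZMod

open ZMod

section CarryExponent

variable {ι : Type*} [Fintype ι] {n : ℕ}

def carryExponent (A : ι → ι → ℤ) (β γ δ : ι → ZMod n) : ℤ :=
  ∑ i, ∑ j, A i j * (β i).val * carry n (γ j) (δ j)

variable [NeZero n] (A : ι → ι → ℤ)

theorem carryExponent_coboundary (β γ δ ε : ι → ZMod n) :
    (carryExponent A γ δ ε + carryExponent A β (γ + δ) ε + carryExponent A β γ δ) -
        (carryExponent A (β + γ) δ ε + carryExponent A β γ (δ + ε)) =
      -∑ i, ∑ j, A i j * carry n (β i) (γ i) * carry n (δ j) (ε j) := by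
  simp only [carryExponent, ← Finset.sum_add_distrib, ← Finset.sum_sub_distrib,
    ← Finset.sum_neg_distrib]
  refine Finset.sum_congr rfl fun i _ => Finset.sum_congr rfl fun j _ => ?_
  have hval := carry_eq (β i) (γ i)
  have hcocycle := carry_add_carry (γ j) (δ j) (ε j)
  simp only [Pi.add_apply]
  linear_combination A i j * (β i).val * hcocycle + A i j * carry n (δ j) (ε j) * hval

theorem carryExponent_cocycle_modEq (β γ δ ε : ι → ZMod n) :
    carryExponent A γ δ ε + carryExponent A β (γ + δ) ε + carryExponent A β γ δ ≡
      carryExponent A (β + γ) δ ε + carryExponent A β γ (δ + ε) [ZMOD n ^ 2] := by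
  refine (Int.modEq_iff_dvd.mpr ?_).symm
  rw [carryExponent_coboundary, dvd_neg]
  refine Finset.dvd_sum fun i _ => Finset.dvd_sum fun j _ => ?_
  rw [sq, mul_assoc]
  exact dvd_mul_of_dvd_right (mul_dvd_mul (dvd_carry _ _) (dvd_carry _ _)) _

theorem carryExponent_single [DecidableEq ι] (i : ι) (x y z : ZMod n) :
    carryExponent A (Pi.single i x) (Pi.single i y) (Pi.single i z) =
      A i i * x.val * carry n y z := by
  rw [carryExponent, Finset.sum_eq_single i, Finset.sum_eq_single i] <;>
    simp_all [Pi.single_apply]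

end CarryExponent

def IsMulThreeCoboundary {G M : Type*} [Add G] [CommGroupWithZero M] (ψ : G → G → G → M) :
    Prop :=
  ∃ b : G → G → M, (∀ x y, b x y ≠ 0) ∧
    ∀ β γ δ, ψ β γ δ = b γ δ * b β (γ + δ) / (b (β + γ) δ * b β γ)

namespace IsMulThreeCoboundary

variable {G H M : Type*} [CommGroupWithZero M] {ψ : G → G → G → M}

theorem comp [AddZeroClass G] [AddZeroClass H] (hψ : IsMulThreeCoboundary ψ) (f : H →+ G) :
    IsMulThreeCoboundary fun x y z => ψ (f x) (f y) (f z) := by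
  obtain ⟨b, hb0, hb⟩ := hψ
  exact ⟨fun x y => b (f x) (f y), fun x y => hb0 _ _, fun x y z => by simp only [hb, map_add]⟩

theorem prod_eq_one [AddGroup G] [Fintype G] (hψ : IsMulThreeCoboundary ψ) (g : G) :
    ∏ y, ψ g y g = 1 := by
  obtain ⟨b, hb0, hb⟩ := hψ
  have hleft : ∏ y, b (g + y) g = ∏ y, b y g := Equiv.prod_comp (Equiv.addLeft g) (b · g)
  have hright : ∏ y, b g (y + g) = ∏ y, b g y := Equiv.prod_comp (Equiv.addRight g) (b g ·)
  simp only [hb, Finset.prod_div_distrib, Finset.prod_mul_distrib, hleft, hright]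
  exact div_self (mul_ne_zero (Finset.prod_ne_zero_iff.mpr fun y _ => hb0 _ _)
    (Finset.prod_ne_zero_iff.mpr fun y _ => hb0 _ _))

end IsMulThreeCoboundary

theorem prod_zpow_eq_zpow_sum₀ {ι G₀ : Type*} [CommGroupWithZero G₀] {a : G₀} (ha : a ≠ 0)
    (s : Finset ι) (f : ι → ℤ) : ∏ x ∈ s, a ^ f x = a ^ ∑ x ∈ s, f x := by
  classical
  induction s using Finset.cons_induction with
  | empty => simp
  | cons x s hx ih => rw [Finset.prod_cons, Finset.sum_cons, ih, zpow_add₀ ha]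

namespace IsPrimitiveRoot

variable {G₀ : Type*} [CommGroupWithZero G₀] {ζ : G₀} {k : ℕ}

theorem zpow_eq_zpow_of_modEq (hζ : IsPrimitiveRoot ζ k) (hk : k ≠ 0) {x y : ℤ}
    (h : x ≡ y [ZMOD k]) : ζ ^ x = ζ ^ y := by
  obtain ⟨c, hc⟩ := Int.modEq_iff_dvd.mp h
  rw [show y = x + k * c by omega, zpow_add₀ (hζ.ne_zero hk), zpow_mul, hζ.zpow_eq_one,
    one_zpow, mul_one]

theorem dvd_of_zpow_mul_eq_one_s15 {n : ℕ} (hζ : IsPrimitiveRoot ζ (n ^ 2)) (hn : n ≠ 0) {c : ℤ}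
    (h : ζ ^ (c * n) = 1) : (n : ℤ) ∣ c := by
  rw [hζ.zpow_eq_one_iff_dvd, Nat.cast_pow, sq] at h
  exact (mul_dvd_mul_iff_right (by exact_mod_cast hn)).mp h

end IsPrimitiveRoot

theorem assoc_cocycle_multivariable_general
    (n m : ℕ) (hn : 2 ≤ n)
    (q : ℂ) (hq : IsPrimitiveRoot q (n ^ 2))
    (a : Fin m → Fin m → ZMod (n ^ 2))
    (Ψ : (Fin m → ZMod n) → (Fin m → ZMod n) → (Fin m → ZMod n) → ℂ)
    (hΨ : ∀ β γ δ : Fin m → ZMod n,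
      Ψ β γ δ = ∏ i : Fin m, ∏ j : Fin m,
        q ^ (((a i j).val : ℤ) * ((β i).val : ℤ) *
          ((((γ j).val : ℤ) + ((δ j).val : ℤ)) % (n : ℤ)
            - ((γ j).val : ℤ) - ((δ j).val : ℤ)))) :
    (∀ β γ δ ε : Fin m → ZMod n,
      Ψ γ δ ε * Ψ β (γ + δ) ε * Ψ β γ δ = Ψ (β + γ) δ ε * Ψ β γ (δ + ε)) ∧
    ((∃ i : Fin m,
        ZMod.castHom (dvd_pow_self n two_ne_zero) (ZMod n) (a i i) ≠ 0) →
      ¬ ∃ b : (Fin m → ZMod n) → (Fin m → ZMod n) → ℂ,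
          (∀ x y, b x y ≠ 0) ∧
          ∀ β γ δ : Fin m → ZMod n,
            Ψ β γ δ = b γ δ * b β (γ + δ) / (b (β + γ) δ * b β γ)) := by
  have : Fact (1 < n) := ⟨hn⟩
  have hq0 : q ≠ 0 := hq.ne_zero (by positivity)
  have hΨ_eq : ∀ β γ δ,
      Ψ β γ δ = q ^ carryExponent (fun i j => ((a i j).val : ℤ)) β γ δ := by
    intro β γ δ
    simp only [hΨ, prod_zpow_eq_zpow_sum₀ hq0]
    rfl
  refine ⟨fun β γ δ ε => ?_, fun ⟨i, hi⟩ hcob => hi ?_⟩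
  · simp only [hΨ_eq, ← zpow_add₀ hq0]
    exact hq.zpow_eq_zpow_of_modEq (by positivity)
      (mod_cast carryExponent_cocycle_modEq _ β γ δ ε)
  · have hprod := (IsMulThreeCoboundary.comp hcob (AddMonoidHom.single _ i)).prod_eq_one 1
    simp only [AddMonoidHom.single_apply, hΨ_eq, carryExponent_single,
      prod_zpow_eq_zpow_sum₀ hq0, ← Finset.mul_sum, sum_carry_left, ZMod.val_one, Nat.cast_one,
      mul_one, mul_neg] at hprod
    rw [zpow_neg, inv_eq_one] at hprod
    rw [ZMod.castHom_apply, ZMod.cast_eq_val, ZMod.natCast_eq_zero_iff]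
    exact Int.natCast_dvd_natCast.mp (hq.dvd_of_zpow_mul_eq_one_s15 (by positivity) hprod)

/-- For `q` a primitive `n²`-th root of unity and residues `a_{ij}` mod `n²`,
the function `Ψ(β,γ,δ) = Π_{i,j} q^{a_{ij} β_i ((γ_j+δ_j)' - γ_j - δ_j)}` on
`(ℤ_n^m)³` (components taken in `{0,…,n-1}`) is a 3-cocycle on `ℤ_n^m`;
moreover, if some `a_{ii} ≢ 0 (mod n)`, then `Ψ` is not a coboundary, i.e. it
represents a nontrivial class in `H³(ℤ_n^m, ℂ*)`. -/
theorem assoc_cocycle_multivariable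
    (n m : ℕ) (hn : 2 ≤ n) (hm : 1 ≤ m)
    (q : ℂ) (hq : IsPrimitiveRoot q (n ^ 2))
    (a : Fin m → Fin m → ZMod (n ^ 2))
    (Ψ : (Fin m → ZMod n) → (Fin m → ZMod n) → (Fin m → ZMod n) → ℂ)
    (hΨ : ∀ β γ δ : Fin m → ZMod n,
      Ψ β γ δ = ∏ i : Fin m, ∏ j : Fin m,
        q ^ (((a i j).val : ℤ) * ((β i).val : ℤ) *
          ((((γ j).val : ℤ) + ((δ j).val : ℤ)) % (n : ℤ)
            - ((γ j).val : ℤ) - ((δ j).val : ℤ)))) :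
    (∀ β γ δ ε : Fin m → ZMod n,
      Ψ γ δ ε * Ψ β (γ + δ) ε * Ψ β γ δ = Ψ (β + γ) δ ε * Ψ β γ (δ + ε)) ∧
    ((∃ i : Fin m,
        ZMod.castHom (dvd_pow_self n two_ne_zero) (ZMod n) (a i i) ≠ 0) →
      ¬ ∃ b : (Fin m → ZMod n) → (Fin m → ZMod n) → ℂ,
          (∀ x y, b x y ≠ 0) ∧
          ∀ β γ δ : Fin m → ZMod n,
            Ψ β γ δ = b γ δ * b β (γ + δ) / (b (β + γ) δ * b β γ)) :=
  assoc_cocycle_multivariable_general n m hn q hq a Ψ hΨ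
end

section
/- Let H be a Hopf algebra containing commuting grouplike elements g₁, g₂ of order p² and skew-primitive elements x₁, x₂ with g_i x_j g_i^{-1} = q^{δ_{ij}} x_j, Δ(x₁) = x₁⊗g₁g₂^d + 1⊗x₁, Δ(x₂) = x₂⊗g₁^b g₂^{bd} + 1⊗x₂. Let T = Σ q^{λβ₁γ₂} 1_β ⊗ 1_γ over β,γ ∈ (Z/p²Z)², with 1_β the primitive idempotents of C[Z_{p²}²]. Then under the twisted coproduct Δ_T(z) = T Δ(z) T^{-1}, one has Δ_T(x₁) = x₁⊗g₁g₂^{λ+d} + 1⊗x₁ and Δ_T(x₂) = x₂⊗g₁^b g₂^{bd} + g₁^λ⊗x₂. -/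
/-!
With `ψ a = q ^ a.val`, an additive character of `ℤ/p²`, the twist is
`T = ∑ ψ(λβ₁γ₂) 1_β ⊗ 1_γ`. The grouplikes act on `1_β` by the scalars `ψ β₁`, `ψ β₂`, so they
commute with every `1_β`, while `x_i` shifts the index of `1_β` by `ε_i`. Passing `T` through
`x_i ⊗ 1` therefore reindexes its first factor, and the discrepancy `ψ(λ(ε_i)₁γ₂)` is exactly the
scalar by which `g₂^{λ(ε_i)₁}` acts on `1_γ`; symmetrically for `1 ⊗ x_i` and `g₁^{λ(ε_i)₂}`.
Hence `T (x₁ ⊗ y) = (x₁ ⊗ g₂^λ y) T` and `T (1 ⊗ x₂) = (g₁^λ ⊗ x₂) T`, while `T` commutes with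
`x₂ ⊗ y` and `1 ⊗ x₁`.
-/

open scoped TensorProduct

theorem AddChar.map_mul_eq_pow_val {n : ℕ} [NeZero n] {M : Type*} [CommMonoid M]
    (ψ : AddChar (ZMod n) M) (a b : ZMod n) : ψ (a * b) = ψ b ^ a.val := by
  rw [← AddChar.map_nsmul_eq_pow, nsmul_eq_mul, ZMod.natCast_zmod_val]

theorem mul_pow_eq_pow_smul_of_mul_eq_smul {M A : Type*} [Monoid M] [Monoid A] [MulAction M A]
    [IsScalarTower M A A] {e g : A} {c : M} (h : e * g = c • e) (k : ℕ) :
    e * g ^ k = c ^ k • e := by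
  induction k with
  | zero => simp
  | succ k ih => rw [pow_succ, ← mul_assoc, ih, smul_mul_assoc, h, smul_smul, pow_succ]

namespace CompleteOrthogonalIdempotents

variable {R H ι : Type*} [CommSemiring R] [Ring H] [Algebra R H] [Fintype ι] {e : ι → H}

theorem eq_sum_smul_of_mul_eq_smul (he : CompleteOrthogonalIdempotents e) {g : H} {c : ι → R}
    (hg : ∀ i, e i * g = c i • e i) : g = ∑ i, c i • e i := by
  rw [← one_mul g, ← he.complete, Finset.sum_mul]
  exact Finset.sum_congr rfl fun i _ ↦ hg i

theorem mul_apply_eq_smul (he : CompleteOrthogonalIdempotents e) {g : H} {c : ι → R}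
    (hg : ∀ i, e i * g = c i • e i) (j : ι) : g * e j = c j • e j := by
  classical
  rw [he.eq_sum_smul_of_mul_eq_smul hg, Finset.sum_mul]
  simp_rw [smul_mul_assoc, he.mul_eq, smul_ite, smul_zero, Finset.sum_ite_eq', Finset.mem_univ,
    if_true]

theorem commute_of_mul_eq_smul (he : CompleteOrthogonalIdempotents e) {g : H} {c : ι → R}
    (hg : ∀ i, e i * g = c i • e i) (j : ι) : Commute (e j) g := by
  rw [Commute, SemiconjBy, hg, he.mul_apply_eq_smul hg]

end CompleteOrthogonalIdempotents

section Twist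

variable {R H ι : Type*} [CommSemiring R] [Ring H] [Algebra R H] [Fintype ι]

def twist (e : ι → H) (t : ι → ι → R) : H ⊗[R] H :=
  ∑ β, ∑ γ, t β γ • (e β ⊗ₜ e γ)

variable [AddCommGroup ι] {e : ι → H} {t : ι → ι → R} (he : CompleteOrthogonalIdempotents e)
  {x y h : H} {s : ι} {c : ι → R}
include he

theorem twist_mul_tmul_left_shift (hx : ∀ i, e i * x = x * e (i - s))
    (hh : ∀ i, e i * h = c i • e i) (hy : ∀ i, Commute (e i) y)
    (ht : ∀ β γ, t (β + s) γ = t β γ * c γ) :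
    twist e t * (x ⊗ₜ y) = (x ⊗ₜ (h * y)) * twist e t := by
  simp only [twist, Finset.sum_mul, Finset.mul_sum]
  rw [← Equiv.sum_comp (Equiv.addRight s)]
  refine Fintype.sum_congr _ _ fun β ↦ Fintype.sum_congr _ _ fun γ ↦ ?_
  rw [Equiv.coe_addRight, smul_mul_assoc, mul_smul_comm, Algebra.TensorProduct.tmul_mul_tmul,
    Algebra.TensorProduct.tmul_mul_tmul, hx, add_sub_cancel_right, mul_assoc h,
    ← (hy γ).eq, ← mul_assoc h, he.mul_apply_eq_smul hh, smul_mul_assoc,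
    TensorProduct.tmul_smul, smul_smul, ht]

theorem twist_mul_tmul_right_shift (hx : ∀ i, e i * x = x * e (i - s))
    (hh : ∀ i, e i * h = c i • e i) (hy : ∀ i, Commute (e i) y)
    (ht : ∀ β γ, t β (γ + s) = t β γ * c β) :
    twist e t * (y ⊗ₜ x) = ((h * y) ⊗ₜ x) * twist e t := by
  simp only [twist, Finset.sum_mul, Finset.mul_sum]
  refine Fintype.sum_congr _ _ fun β ↦ ?_
  rw [← Equiv.sum_comp (Equiv.addRight s)]
  refine Fintype.sum_congr _ _ fun γ ↦ ?_
  rw [Equiv.coe_addRight, smul_mul_assoc, mul_smul_comm, Algebra.TensorProduct.tmul_mul_tmul,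
    Algebra.TensorProduct.tmul_mul_tmul, hx, add_sub_cancel_right, mul_assoc h,
    ← (hy β).eq, ← mul_assoc h, he.mul_apply_eq_smul hh, smul_mul_assoc,
    ← TensorProduct.smul_tmul', smul_smul, ht]

end Twist

section BicharacterTwist

variable {n : ℕ} [NeZero n] {R H : Type*} [CommSemiring R] [Ring H] [Algebra R H]
  (ψ : AddChar (ZMod n) R) (lam : ZMod n)

def bicharTwist (e : ZMod n × ZMod n → H) : H ⊗[R] H :=
  twist e fun β γ ↦ ψ (lam * β.1 * γ.2)

variable {ψ} {e : ZMod n × ZMod n → H} (he : CompleteOrthogonalIdempotents e) {x y : H}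
include he

theorem bicharTwist_mul_tmul_of_shift_fst {g₂ : H} (heg₂ : ∀ β, e β * g₂ = ψ β.2 • e β)
    (hx : ∀ β, e β * x = x * e (β - (1, 0))) (hy : ∀ β, Commute (e β) y) :
    bicharTwist ψ lam e * (x ⊗ₜ y) = (x ⊗ₜ (g₂ ^ lam.val * y)) * bicharTwist ψ lam e :=
  twist_mul_tmul_left_shift he hx (fun β ↦ mul_pow_eq_pow_smul_of_mul_eq_smul (heg₂ β) _) hy
    fun β γ ↦ by
      rw [← AddChar.map_mul_eq_pow_val, ← AddChar.map_add_eq_mul, Prod.fst_add]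
      ring_nf

theorem bicharTwist_mul_one_tmul_of_shift_fst (hx : ∀ β, e β * x = x * e (β - (1, 0))) :
    bicharTwist ψ lam e * (1 ⊗ₜ x) = (1 ⊗ₜ x) * bicharTwist ψ lam e := by
  simpa [bicharTwist] using twist_mul_tmul_right_shift he hx (h := 1) (c := 1) (fun β ↦ by simp)
    (fun β ↦ Commute.one_right (e β)) fun β γ ↦ by simp

theorem bicharTwist_mul_tmul_of_shift_snd (hx : ∀ β, e β * x = x * e (β - (0, 1)))
    (hy : ∀ β, Commute (e β) y) :
    bicharTwist ψ lam e * (x ⊗ₜ y) = (x ⊗ₜ y) * bicharTwist ψ lam e := by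
  simpa [bicharTwist] using twist_mul_tmul_left_shift he hx (h := 1) (c := 1) (fun β ↦ by simp) hy
    fun β γ ↦ by simp

theorem bicharTwist_mul_one_tmul_of_shift_snd {g₁ : H} (heg₁ : ∀ β, e β * g₁ = ψ β.1 • e β)
    (hx : ∀ β, e β * x = x * e (β - (0, 1))) :
    bicharTwist ψ lam e * (1 ⊗ₜ x) = ((g₁ ^ lam.val) ⊗ₜ x) * bicharTwist ψ lam e := by
  simpa [bicharTwist] using twist_mul_tmul_right_shift he hx
    (fun β ↦ mul_pow_eq_pow_smul_of_mul_eq_smul (heg₁ β) _) (fun β ↦ Commute.one_right (e β))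
    fun β γ ↦ by
      rw [← AddChar.map_mul_eq_pow_val, ← AddChar.map_add_eq_mul, Prod.snd_add]
      ring_nf

end BicharacterTwist

theorem twisted_coproduct_formulas_general
    (p : ℕ) [NeZero p]
    (q : ℂ) (hq : IsPrimitiveRoot q (p ^ 2))
    (lam b d : ZMod (p ^ 2))
    (H : Type*) [Ring H] [HopfAlgebra ℂ H]
    (g₁ g₂ x₁ x₂ : H)
    -- `g₁, g₂` are commuting grouplike elements of order dividing `p²`
    (hgg : g₁ * g₂ = g₂ * g₁)
    (hg₂ : g₂ ^ (p ^ 2) = 1)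
    -- skew-primitivity of `x₁, x₂`
    (hx₁ : Coalgebra.comul (R := ℂ) x₁
      = x₁ ⊗ₜ (g₁ * g₂ ^ d.val) + 1 ⊗ₜ x₁)
    (hx₂ : Coalgebra.comul (R := ℂ) x₂
      = x₂ ⊗ₜ (g₁ ^ b.val * g₂ ^ (b * d).val) + 1 ⊗ₜ x₂)
    -- the primitive idempotents `1_β` of `ℂ[ℤ_{p²} × ℤ_{p²}] ⊂ H`
    (e : ZMod (p ^ 2) × ZMod (p ^ 2) → H)
    (he_sum : ∑ β : ZMod (p ^ 2) × ZMod (p ^ 2), e β = 1)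
    (he_orth : ∀ β γ, e β * e γ = if β = γ then e β else 0)
    (heg₁ : ∀ β, e β * g₁ = q ^ (β.1.val) • e β)
    (heg₂ : ∀ β, e β * g₂ = q ^ (β.2.val) • e β)
    (hex₁ : ∀ β, e β * x₁ = x₁ * e (β - (1, 0)))
    (hex₂ : ∀ β, e β * x₂ = x₂ * e (β - (0, 1)))
    -- the twist `T`
    (T : H ⊗[ℂ] H)
    (hT_def : T = ∑ β : ZMod (p ^ 2) × ZMod (p ^ 2),
      ∑ γ : ZMod (p ^ 2) × ZMod (p ^ 2),
        q ^ ((lam * β.1 * γ.2).val) • (e β ⊗ₜ e γ))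
    (hT : IsUnit T) :
    T * Coalgebra.comul (R := ℂ) x₁ * (↑hT.unit⁻¹ : H ⊗[ℂ] H)
        = x₁ ⊗ₜ (g₁ * g₂ ^ (lam + d).val) + 1 ⊗ₜ x₁ ∧
    T * Coalgebra.comul (R := ℂ) x₂ * (↑hT.unit⁻¹ : H ⊗[ℂ] H)
        = x₂ ⊗ₜ (g₁ ^ b.val * g₂ ^ (b * d).val) + (g₁ ^ lam.val) ⊗ₜ x₂ := by
  set ψ := AddChar.zmodChar (p ^ 2) hq.pow_eq_one
  have hT_twist : T = bicharTwist ψ lam e := hT_def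
  have he : CompleteOrthogonalIdempotents e :=
    ⟨⟨fun β ↦ by simpa [IsIdempotentElem] using he_orth β β,
      fun β γ hne ↦ by simpa [hne] using he_orth β γ⟩, he_sum⟩
  have hcomm₁ β : Commute (e β) g₁ := he.commute_of_mul_eq_smul heg₁ β
  have hcomm₂ β : Commute (e β) g₂ := he.commute_of_mul_eq_smul heg₂ β
  have hg : g₂ ^ lam.val * (g₁ * g₂ ^ d.val) = g₁ * g₂ ^ (lam + d).val := by
    rw [ZMod.val_add, ← pow_eq_pow_mod _ hg₂, pow_add, (Commute.pow_left hgg.symm _).left_comm]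
  have conj {a c : H ⊗[ℂ] H} (h : T * a = c * T) : T * a * ↑hT.unit⁻¹ = c := by
    rw [h, mul_assoc, hT.mul_val_inv, mul_one]
  constructor
  · refine conj ?_
    rw [hx₁, hT_twist, mul_add, add_mul, ← hg,
      bicharTwist_mul_tmul_of_shift_fst lam he heg₂ hex₁
        fun β ↦ (hcomm₁ β).mul_right ((hcomm₂ β).pow_right _),
      bicharTwist_mul_one_tmul_of_shift_fst lam he hex₁]
  · refine conj ?_
    rw [hx₂, hT_twist, mul_add, add_mul,
      bicharTwist_mul_tmul_of_shift_snd lam he hex₂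
        fun β ↦ ((hcomm₁ β).pow_right _).mul_right ((hcomm₂ β).pow_right _),
      bicharTwist_mul_one_tmul_of_shift_snd lam he heg₁ hex₂]

/-- Twisting the coproduct by `T = Σ q^{λβ₁γ₂} 1_β ⊗ 1_γ`: in a Hopf algebra `H`
containing commuting grouplike elements `g₁, g₂` of order `p²` and
skew-primitive elements `x₁, x₂` with `g_i x_j g_i⁻¹ = q^{δ_{ij}} x_j`,
`Δ(x₁) = x₁⊗g₁g₂^d + 1⊗x₁`, `Δ(x₂) = x₂⊗g₁^b g₂^{bd} + 1⊗x₂`, the twisted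
coproduct `Δ_T(z) = TΔ(z)T⁻¹` satisfies
`Δ_T(x₁) = x₁⊗g₁g₂^{λ+d} + 1⊗x₁` and `Δ_T(x₂) = x₂⊗g₁^b g₂^{bd} + g₁^λ⊗x₂`. -/
theorem twisted_coproduct_formulas
    (p : ℕ) (hp : p.Prime) [NeZero p]
    (q : ℂ) (hq : IsPrimitiveRoot q (p ^ 2))
    (lam b d : ZMod (p ^ 2))
    (H : Type*) [Ring H] [HopfAlgebra ℂ H]
    (g₁ g₂ x₁ x₂ : H)
    -- `g₁, g₂` are commuting grouplike elements of order dividing `p²`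
    (hgg : g₁ * g₂ = g₂ * g₁)
    (hg₁ : g₁ ^ (p ^ 2) = 1) (hg₂ : g₂ ^ (p ^ 2) = 1)
    (hg₁grp : Coalgebra.comul (R := ℂ) g₁ = g₁ ⊗ₜ g₁)
    (hg₂grp : Coalgebra.comul (R := ℂ) g₂ = g₂ ⊗ₜ g₂)
    -- `g_i x_j g_i⁻¹ = q^{δ_{ij}} x_j`
    (h11 : g₁ * x₁ = q • (x₁ * g₁)) (h12 : g₁ * x₂ = x₂ * g₁)
    (h21 : g₂ * x₁ = x₁ * g₂) (h22 : g₂ * x₂ = q • (x₂ * g₂))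
    -- skew-primitivity of `x₁, x₂`
    (hx₁ : Coalgebra.comul (R := ℂ) x₁
      = x₁ ⊗ₜ (g₁ * g₂ ^ d.val) + 1 ⊗ₜ x₁)
    (hx₂ : Coalgebra.comul (R := ℂ) x₂
      = x₂ ⊗ₜ (g₁ ^ b.val * g₂ ^ (b * d).val) + 1 ⊗ₜ x₂)
    -- the primitive idempotents `1_β` of `ℂ[ℤ_{p²} × ℤ_{p²}] ⊂ H`
    (e : ZMod (p ^ 2) × ZMod (p ^ 2) → H)
    (he_sum : ∑ β : ZMod (p ^ 2) × ZMod (p ^ 2), e β = 1)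
    (he_orth : ∀ β γ, e β * e γ = if β = γ then e β else 0)
    (heg₁ : ∀ β, e β * g₁ = q ^ (β.1.val) • e β)
    (heg₂ : ∀ β, e β * g₂ = q ^ (β.2.val) • e β)
    (hex₁ : ∀ β, e β * x₁ = x₁ * e (β - (1, 0)))
    (hex₂ : ∀ β, e β * x₂ = x₂ * e (β - (0, 1)))
    -- the twist `T`
    (T : H ⊗[ℂ] H)
    (hT_def : T = ∑ β : ZMod (p ^ 2) × ZMod (p ^ 2),
      ∑ γ : ZMod (p ^ 2) × ZMod (p ^ 2),
        q ^ ((lam * β.1 * γ.2).val) • (e β ⊗ₜ e γ))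
    (hT : IsUnit T) :
    T * Coalgebra.comul (R := ℂ) x₁ * (↑hT.unit⁻¹ : H ⊗[ℂ] H)
        = x₁ ⊗ₜ (g₁ * g₂ ^ (lam + d).val) + 1 ⊗ₜ x₁ ∧
    T * Coalgebra.comul (R := ℂ) x₂ * (↑hT.unit⁻¹ : H ⊗[ℂ] H)
        = x₂ ⊗ₜ (g₁ ^ b.val * g₂ ^ (b * d).val) + (g₁ ^ lam.val) ⊗ₜ x₂ :=
  twisted_coproduct_formulas_general p q hq lam b d H g₁ g₂ x₁ x₂ hgg hg₂ hx₁ hx₂ e he_sum he_orth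
    heg₁ heg₂ hex₁ hex₂ T hT_def hT
end
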